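/- Let p/q = [a_1,…,a_n] be an irreducible fraction with 0 < p/q < 1, q odd, and a_1 ≥ 2, so that (q−p)/q = [1, a_1−1, a_2,…,a_n]. Let t_1,…,t_n be the signs defined from AT(p/q) and t'_1,…,t'_{n+1} the signs defined from AT((q−p)/q). Then t'_{i+1} = −t_i for every 1 ≤ i ≤ n. -/

import Mathlib

/-!
Ancestral triangles of continued fractions (Yamada / Farey diagrams),
following "Cluster variables and Alexander polynomials of 2-bridge knots".
-/

noncomputable section

open scoped BigOperators

attribute [local instance] Classical.propDecidable

namespace TwoBridge

/-- The continued fraction `[a₁,…,aₙ] = 1/(a₁ + 1/(a₂ + ⋯ + 1/aₙ))`. -/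
def cf : List ℕ → ℚ
  | [] => 0
  | a :: t => 1 / ((a : ℚ) + cf t)

/-- Partial sums `l_k = a₁ + ⋯ + a_k`. -/
def ell (a : List ℕ) (k : ℕ) : ℕ := (a.take k).sum

/-- The index of the fan containing the `i`-th triangle (1-based): the least `k` with
`i ≤ l_k − 1`.  Fan 1 consists of `T_1, …, T_{a₁−1}` and, for `k ≥ 2`, fan `k` consists of
`T_{l_{k−1}}, …, T_{l_k − 1}`. -/
def fanIdx (a : List ℕ) (i : ℕ) : ℕ := sInf {k | i < ell a k}

/-- The `i`-th triangle (1-based) of the ancestral triangle of `[a₁,…,aₙ]` is a *right*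
triangle iff it lies in an odd-indexed fan (first `a₁ − 1` triangles are right, the next
`a₂` left, the next `a₃` right, and so on alternately). -/
def isRight (a : List ℕ) (i : ℕ) : Prop := Odd (fanIdx a i)

/-- Vertex indices of the ancestral triangle: `0 ↦ 0/1`, `1 ↦ 1/1`, and `j + 1 ↦` the apex
(new vertex) of the triangle `T_j`.  `edgeIdx a i` is the pair of vertex indices
(left endpoint, right endpoint) of the most recently created edge after stacking `i`
triangles; the triangle `T_{i+1}` is stacked on this edge. -/
def edgeIdx (a : List ℕ) : ℕ → ℕ × ℕ
  | 0 => (0, 1)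
  | i + 1 => if isRight a (i + 1) then ((edgeIdx a i).1, i + 2) else (i + 2, (edgeIdx a i).2)

/-- The labels (numerator, denominator) of the endpoints of the active edge after stacking
`i` triangles; the new vertex of each triangle is labelled by the mediant of the two
endpoints of the edge it is stacked on. -/
def edgeLbl (a : List ℕ) : ℕ → (ℕ × ℕ) × (ℕ × ℕ)
  | 0 => ((0, 1), (1, 1))
  | i + 1 =>
      if isRight a (i + 1) then
        ((edgeLbl a i).1,
          ((edgeLbl a i).1.1 + (edgeLbl a i).2.1, (edgeLbl a i).1.2 + (edgeLbl a i).2.2))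
      else
        (((edgeLbl a i).1.1 + (edgeLbl a i).2.1, (edgeLbl a i).1.2 + (edgeLbl a i).2.2),
          (edgeLbl a i).2)

/-- The label (numerator, denominator) of the vertex with index `v`. -/
def vtxLabel (a : List ℕ) (v : ℕ) : ℕ × ℕ :=
  if v = 0 then (0, 1)
  else if v = 1 then (1, 1)
  else ((edgeLbl a (v - 2)).1.1 + (edgeLbl a (v - 2)).2.1,
        (edgeLbl a (v - 2)).1.2 + (edgeLbl a (v - 2)).2.2)

/-- `u` and `w` are joined by an edge of the ancestral triangle. -/
def IsEdgeAT (a : List ℕ) (u w : ℕ) : Prop :=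
  (u = 0 ∧ w = 1) ∨ (u = 1 ∧ w = 0) ∨
    (2 ≤ u ∧ (w = (edgeIdx a (u - 2)).1 ∨ w = (edgeIdx a (u - 2)).2)) ∨
    (2 ≤ w ∧ (u = (edgeIdx a (w - 2)).1 ∨ u = (edgeIdx a (w - 2)).2))

/-- A step of a path: an edge of the ancestral triangle along which the denominator of the
vertex label strictly decreases. -/
def IsStep (a : List ℕ) (u w : ℕ) : Prop :=
  IsEdgeAT a u w ∧ (vtxLabel a w).2 < (vtxLabel a u).2

/-- `IsPathFrom a s γ` : `γ` is a path of the ancestral triangle of `a` starting at the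
vertex with index `s` and ending at `0/1` or `1/1`, the denominator of the label strictly
decreasing along every edge. -/
def IsPathFrom (a : List ℕ) (s : ℕ) (γ : List ℕ) : Prop :=
  γ.head? = some s ∧ (γ.getLast? = some 0 ∨ γ.getLast? = some 1) ∧ List.Chain' (IsStep a) γ

/-- The (indices of the) triangles cut off to the left of the path by a single step from
vertex `u` down to vertex `w`. -/
def stepLeft (a : List ℕ) (u w : ℕ) : Finset ℕ :=
  if 2 ≤ u ∧ w = (edgeIdx a (u - 2)).2 then Finset.Ioc (w - 1) (u - 1) else ∅

/-- The set `S_γ` of (indices of) triangles lying on the left side of the path `γ`. -/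
def pathLeftSet (a : List ℕ) (γ : List ℕ) : Finset ℕ :=
  (γ.zip γ.tail).foldr (fun p s => stepLeft a p.1 p.2 ∪ s) ∅


/-- The unordered edge `{x, y}` is traversed by the path `γ`. -/
def onPath (γ : List ℕ) (x y : ℕ) : Prop :=
  (x, y) ∈ γ.zip γ.tail ∨ (y, x) ∈ γ.zip γ.tail

/-- The three sides of the triangle `T_m` (apex index `m + 1`, base `edgeIdx a (m−1)`). -/
def triSides (a : List ℕ) (m : ℕ) : List (ℕ × ℕ) :=
  [(m + 1, (edgeIdx a (m - 1)).1), (m + 1, (edgeIdx a (m - 1)).2),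
    ((edgeIdx a (m - 1)).1, (edgeIdx a (m - 1)).2)]

/-- The path `γ` does not go along two sides of the same triangle. -/
def NoTwoSides (a γ : List ℕ) : Prop :=
  ∀ m, 1 ≤ m → m ≤ a.sum - 1 →
    ¬ ∃ e₁ ∈ triSides a m, ∃ e₂ ∈ triSides a m,
        e₁ ≠ e₂ ∧ onPath γ e₁.1 e₁.2 ∧ onPath γ e₂.1 e₂.2

/-- The label of a vertex reduced modulo 2 (so each label becomes `0/1`, `1/1` or `1/0`). -/
def par2 (a : List ℕ) (v : ℕ) : ℕ × ℕ := ((vtxLabel a v).1 % 2, (vtxLabel a v).2 % 2)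

/-- The parity condition on the edges of the Seifert path: if `p/q ≡ 1/1 (mod 2)` it uses
only edges joining a vertex `≡ 1/1` to a vertex `≡ 1/0`; otherwise it uses only edges
joining a vertex `≡ 0/1` to a vertex `≡ 1/0`.  (The top vertex, labeled `p/q`, has index
`a.sum`.) -/
def SeifertParity (a γ : List ℕ) : Prop :=
  if par2 a a.sum = (1, 1) then
    List.Chain'
      (fun u w => (par2 a u = (1, 1) ∧ par2 a w = (1, 0)) ∨
        (par2 a u = (1, 0) ∧ par2 a w = (1, 1))) γ
  else
    List.Chain'
      (fun u w => (par2 a u = (0, 1) ∧ par2 a w = (1, 0)) ∨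
        (par2 a u = (1, 0) ∧ par2 a w = (0, 1))) γ

/-- `γ` is the Seifert path of the ancestral triangle of `a`: a path from the top vertex
that never goes along two sides of the same triangle and satisfies the parity condition. -/
def IsSeifert (a γ : List ℕ) : Prop :=
  IsPathFrom a a.sum γ ∧ NoTwoSides a γ ∧ SeifertParity a γ

/-- The bottom edge of `Fan_k` (`k ≥ 2`), i.e. the edge shared by `Fan_k` and `Fan_{k−1}`
(the base edge of the first triangle `T_{l_{k−1}}` of `Fan_k`), lies on the path `γ`. -/
def bottomEdgeOn (a γ : List ℕ) (k : ℕ) : Prop :=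
  onPath γ (edgeIdx a ((a.take (k - 1)).sum - 1)).1
    (edgeIdx a ((a.take (k - 1)).sum - 1)).2

/-- The signs `t_k ∈ {±1}` computed from the Seifert path `γ`:
`t₁ = +1` if `p/q ≡ 1/0` or `0/1 (mod 2)` and `t₁ = −1` if `p/q ≡ 1/1 (mod 2)`; and for
`2 ≤ k`, `t_k = −t_{k−1}` if the bottom edge of `Fan_k` lies on `γ`, `t_k = t_{k−1}`
otherwise. -/
def tsgn (a γ : List ℕ) : ℕ → ℤ
  | 0 => 1
  | 1 => if par2 a a.sum = (1, 1) then -1 else 1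
  | k + 2 => (if bottomEdgeOn a γ (k + 2) then -1 else 1) * tsgn a γ (k + 1)

/-- `Fan_k` lies on the left side of the path `γ`. -/
def FanLeft (a γ : List ℕ) (k : ℕ) : Prop :=
  ∀ j, 1 ≤ j → j ≤ a.sum - 1 → fanIdx a j = k → j ∈ pathLeftSet a γ

/-- The position of the triangle `T_j` inside its fan, counted from the bottom
(so `T_j = T_i^{(k)}` with `k = fanIdx a j` and `i = posInFan a j`). -/
def posInFan (a : List ℕ) (j : ℕ) : ℕ :=
  if fanIdx a j = 1 then j else j - (a.take (fanIdx a j - 1)).sum + 1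

/-- The sign `e_i = e(T_i^{(k)})` of a triangle, computed from the Seifert path `γ`:
`(−1)^i` if the bottom edge of `Fan_k` lies on `γ`; otherwise, for `k` odd, `+1` if
`Fan_k` is on the left side of `γ` and `(−1)^{i−1}` if on the right side, and for `k`
even, `+1` if `Fan_k` is on the right side and `(−1)^{i−1}` if on the left side. -/
def esgn (a γ : List ℕ) (j : ℕ) : ℤ :=
  if bottomEdgeOn a γ (fanIdx a j) then (-1) ^ posInFan a j
  else if Odd (fanIdx a j) then
    (if FanLeft a γ (fanIdx a j) then 1 else (-1) ^ (posInFan a j - 1))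
  else (if FanLeft a γ (fanIdx a j) then (-1) ^ (posInFan a j - 1) else 1)

/-- The quantity `d(k)` (taking the first applicable case): `a_k − 1` if `k` is odd and
`t_k = −1` or `k` is even and `t_k = +1`; `t_k` if the bottom edge of `Fan_k` lies on the
Seifert path; and `1` otherwise. -/
def dval (a γ : List ℕ) (k : ℕ) : ℤ :=
  if (Odd k ∧ tsgn a γ k = -1) ∨ (Even k ∧ tsgn a γ k = 1) then (a.getD (k - 1) 0 : ℤ) - 1
  else if bottomEdgeOn a γ k then tsgn a γ k
  else 1

/-- `Σ_{k=1}^n d(k)`, so that `d = −(1/2) · dsum`. -/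
def dsum (a γ : List ℕ) : ℤ := ∑ k ∈ Finset.Icc 1 a.length, dval a γ k

/-!
Reflecting `AT(p/q)` in its vertical axis gives `AT((q−p)/q)`: the first fan of
`[1, a₁−1, a₂, …]` is empty and each later fan is the preceding fan of `[a₁, a₂, …]` with the
opposite orientation. So the two triangles agree once the base vertices `0/1` and `1/1` are
exchanged, and every label `r/s` becomes `(s−r)/s`. Modulo 2 this fixes `1/0` and exchanges
`0/1` with `1/1`; since `q` is odd the top vertex is `≡ 0/1` or `1/1`, so the parity condition
of one Seifert path is the mirror image of the other's. The two endpoints of an edge have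
different parities, hence a path from the top is determined by its parity condition, and the
Seifert path of `AT((q−p)/q)` is the mirror image of that of `AT(p/q)`. This gives `t′₁ = −t₁`;
the bottom edge of `Fan′₂` is the base edge, which no path uses, and the bottom edge of
`Fan′_{k+1}` is the mirror image of that of `Fan_k`, so `t′_{k+1} = −t_k` by induction.

That the top label of `AT(p/q)` is `p/q` (so its denominator is odd) follows by computing the
labels with continuants.
-/

section Labels

variable (a : List ℕ)

lemma edgeLbl_den_pos (m : ℕ) : 0 < (edgeLbl a m).1.2 ∧ 0 < (edgeLbl a m).2.2 := by
  induction m with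
  | zero => simp [edgeLbl]
  | succ m ih => simp only [edgeLbl]; split <;> dsimp only <;> omega

lemma edgeLbl_num_le_den (m : ℕ) :
    (edgeLbl a m).1.1 ≤ (edgeLbl a m).1.2 ∧ (edgeLbl a m).2.1 ≤ (edgeLbl a m).2.2 := by
  induction m with
  | zero => simp [edgeLbl]
  | succ m ih => simp only [edgeLbl]; split <;> dsimp only <;> omega

/-- The two endpoints of every edge are Farey neighbours. -/
lemma edgeLbl_det (m : ℕ) :
    (edgeLbl a m).1.2 * (edgeLbl a m).2.1 = (edgeLbl a m).1.1 * (edgeLbl a m).2.2 + 1 := by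
  induction m with
  | zero => simp [edgeLbl]
  | succ m ih => simp only [edgeLbl]; split <;> linarith

lemma vtxLabel_add_two (m : ℕ) :
    vtxLabel a (m + 2) = (edgeLbl a m).1 + (edgeLbl a m).2 := by
  rw [vtxLabel, if_neg (by omega), if_neg (by omega)]
  rfl

lemma vtxLabel_edgeIdx (m : ℕ) :
    vtxLabel a (edgeIdx a m).1 = (edgeLbl a m).1 ∧
      vtxLabel a (edgeIdx a m).2 = (edgeLbl a m).2 := by
  induction m with
  | zero => simp [edgeIdx, edgeLbl, vtxLabel]
  | succ m ih =>
    simp only [edgeIdx, edgeLbl]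
    split
    · exact ⟨ih.1, vtxLabel_add_two a m⟩
    · exact ⟨vtxLabel_add_two a m, ih.2⟩

lemma edgeIdx_lt (m : ℕ) : (edgeIdx a m).1 < m + 2 ∧ (edgeIdx a m).2 < m + 2 := by
  induction m with
  | zero => simp [edgeIdx]
  | succ m ih => simp only [edgeIdx]; split <;> dsimp only <;> omega

lemma vtxLabel_den_lt {u w : ℕ} (huw : u < w) (hw : 2 ≤ w) :
    (vtxLabel a u).2 < (vtxLabel a w).2 := by
  have hden : StrictMono fun m => (edgeLbl a m).1.2 + (edgeLbl a m).2.2 := by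
    refine strictMono_nat_of_lt_succ fun m => ?_
    have := edgeLbl_den_pos a m
    simp only [edgeLbl]; split <;> dsimp only <;> omega
  obtain ⟨m, rfl⟩ := Nat.exists_eq_add_of_le' hw
  rw [vtxLabel_add_two]
  rcases lt_or_ge u 2 with hu | hu
  · have hu1 : (vtxLabel a u).2 = 1 := by interval_cases u <;> rfl
    have := edgeLbl_den_pos a m
    rw [hu1, Prod.snd_add]
    omega
  · obtain ⟨l, rfl⟩ := Nat.exists_eq_add_of_le' hu
    rw [vtxLabel_add_two]
    exact hden (by omega : l < m)

lemma isStep_iff {u w : ℕ} :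
    IsStep a u w ↔ 2 ≤ u ∧ (w = (edgeIdx a (u - 2)).1 ∨ w = (edgeIdx a (u - 2)).2) := by
  constructor
  · rintro ⟨hedge | hedge | hedge | ⟨hw, hu⟩, hden⟩
    · simp [hedge.1, hedge.2, vtxLabel] at hden
    · simp [hedge.1, hedge.2, vtxLabel] at hden
    · exact hedge
    · have := edgeIdx_lt a (w - 2)
      have := vtxLabel_den_lt a (u := u) (w := w) (by omega) hw
      omega
  · rintro ⟨hu, hw⟩
    refine ⟨Or.inr (Or.inr (Or.inl ⟨hu, hw⟩)), ?_⟩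
    obtain ⟨m, rfl⟩ := Nat.exists_eq_add_of_le' hu
    have hpos := edgeLbl_den_pos a m
    have hends := vtxLabel_edgeIdx a m
    rw [Nat.add_sub_cancel] at hw
    rw [vtxLabel_add_two]
    rcases hw with rfl | rfl
    · rw [hends.1, Prod.snd_add]; omega
    · rw [hends.2, Prod.snd_add]; omega

lemma par2_edgeIdx_ne (a : List ℕ) (m : ℕ) :
    par2 a (edgeIdx a m).1 ≠ par2 a (edgeIdx a m).2 := by
  have hdet := congrArg (fun n : ℕ => (n : ZMod 2)) (edgeLbl_det a m)
  simp only [par2, (vtxLabel_edgeIdx a m).1, (vtxLabel_edgeIdx a m).2, ne_eq, Prod.mk.injEq,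
    ← ZMod.natCast_eq_natCast_iff'] at hdet ⊢
  rintro ⟨h1, h2⟩
  push_cast at hdet
  rw [h1, h2] at hdet
  exact one_ne_zero (by linear_combination hdet.symm)

variable {a}

lemma IsStep.lt {u w : ℕ} (h : IsStep a u w) : w < u := by
  obtain ⟨hu, hw⟩ := (isStep_iff a).1 h
  have := edgeIdx_lt a (u - 2)
  omega

lemma not_isStep_of_le_one {u w : ℕ} (hu : u ≤ 1) : ¬ IsStep a u w := by
  rw [isStep_iff]; omega

end Labels

section Paths

variable {a : List ℕ}

lemma _root_.List.IsChain.rel_of_mem_zip_tail {α : Type*} {R : α → α → Prop} {l : List α}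
    {x y : α} (hl : l.IsChain R) (h : (x, y) ∈ l.zip l.tail) : R x y := by
  induction l with
  | nil => simp at h
  | cons b l ih =>
    cases l with
    | nil => simp at h
    | cons c l =>
      simp only [List.tail_cons, List.zip_cons_cons, List.mem_cons, Prod.mk.injEq] at h
      rcases h with ⟨rfl, rfl⟩ | h
      · exact hl.rel
      · exact ih hl.tail (by simpa using h)

lemma IsPathFrom.tail {x y : ℕ} {l : List ℕ} (h : IsPathFrom a x (x :: y :: l)) :
    IsPathFrom a y (y :: l) :=
  ⟨rfl, by simpa [List.getLast?_cons_cons] using h.2.1, h.2.2.tail⟩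

lemma IsPathFrom.le_one_of_singleton {s x : ℕ} (h : IsPathFrom a s [x]) : x ≤ 1 := by
  rcases h.2.1 with h | h <;> simp only [List.getLast?_singleton, Option.some.injEq] at h <;> omega

lemma IsPathFrom.le_of_mem {s v : ℕ} {γ : List ℕ} (h : IsPathFrom a s γ) (hv : v ∈ γ) :
    v ≤ s := by
  induction γ generalizing s with
  | nil => simp at hv
  | cons x γ ih =>
    obtain rfl : x = s := by simpa using h.1
    rcases List.mem_cons.1 hv with rfl | hv
    · exact le_rfl
    · cases γ with
      | nil => simp at hv
      | cons y γ => exact (ih h.tail hv).trans (h.2.2.rel.lt.le)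

lemma IsPathFrom.eq_of_isChain {Q : ℕ → ℕ → Prop}
    (hQ : ∀ x y z, Q x y → Q x z → par2 a y = par2 a z) {s : ℕ} {γ δ : List ℕ}
    (hγ : IsPathFrom a s γ) (hδ : IsPathFrom a s δ) (hγQ : γ.IsChain Q) (hδQ : δ.IsChain Q) :
    γ = δ := by
  induction γ generalizing s δ with
  | nil => simp [IsPathFrom] at hγ
  | cons x γ ih =>
    obtain rfl : x = s := by simpa using hγ.1
    obtain ⟨_ | ⟨z, δ⟩, rfl⟩ : ∃ δ', δ = x :: δ' := by
      cases δ with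
      | nil => simp [IsPathFrom] at hδ
      | cons y δ => exact ⟨δ, by simpa using hδ.1⟩
    · cases γ with
      | nil => rfl
      | cons y γ =>
        exact absurd hγ.2.2.rel (not_isStep_of_le_one hδ.le_one_of_singleton)
    · cases γ with
      | nil =>
        exact absurd hδ.2.2.rel (not_isStep_of_le_one hγ.le_one_of_singleton)
      | cons y γ =>
        obtain rfl : y = z := by
          have hy := ((isStep_iff a).1 hγ.2.2.rel).2
          have hz := ((isStep_iff a).1 hδ.2.2.rel).2
          have hpar := hQ x y z hγQ.rel hδQ.rel
          have hne := par2_edgeIdx_ne a (x - 2)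
          rcases hy with rfl | rfl <;> rcases hz with rfl | rfl
          · rfl
          · exact absurd hpar hne
          · exact absurd hpar.symm hne
          · rfl
        rw [ih hγ.tail hδ.tail hγQ.tail hδQ.tail]

lemma not_onPath_zero_one {γ : List ℕ} (hγ : γ.IsChain (IsStep a)) : ¬ onPath γ 0 1 := by
  rintro (h | h) <;> exact not_isStep_of_le_one (by omega) (hγ.rel_of_mem_zip_tail h)

end Paths

section Fans

lemma ell_mono (a : List ℕ) : Monotone (ell a) :=
  monotone_nat_of_le_succ fun n => by simp [ell, List.take_add_one]

lemma ell_cons_succ (x : ℕ) (t : List ℕ) (k : ℕ) : ell (x :: t) (k + 1) = x + ell t k := by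
  simp [ell]

lemma fanIdx_eq_of_lt {a : List ℕ} {j k : ℕ} (hk : j < ell a k)
    (hmin : ∀ m < k, ell a m ≤ j) : fanIdx a j = k :=
  le_antisymm (Nat.sInf_le hk) <|
    le_csInf ⟨k, hk⟩ fun m hm => not_lt.1 fun h => (hmin m h).not_gt hm

lemma fanIdx_spec {a : List ℕ} {j : ℕ} (hj : j < a.sum) :
    j < ell a (fanIdx a j) ∧ ell a (fanIdx a j - 1) ≤ j := by
  have hne : {k | j < ell a k}.Nonempty := ⟨a.length, by simpa [ell] using hj⟩
  have hmem : j < ell a (fanIdx a j) := Nat.sInf_mem hne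
  refine ⟨hmem, not_lt.1 fun h => ?_⟩
  have hpos : fanIdx a j ≠ 0 := fun h0 => by simp [h0, ell] at hmem
  have hle : fanIdx a j ≤ fanIdx a j - 1 := Nat.sInf_le (s := {k | j < ell a k}) h
  omega

lemma fanIdx_cons_of_lt {x : ℕ} {t : List ℕ} {j : ℕ} (hj : j < x) : fanIdx (x :: t) j = 1 :=
  fanIdx_eq_of_lt (by simpa [ell] using hj) fun m hm => by interval_cases m; simp [ell]

lemma fanIdx_cons_of_le {x : ℕ} {t : List ℕ} {j : ℕ} (hx : x ≤ j) (hj : j - x < t.sum) :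
    fanIdx (x :: t) j = fanIdx t (j - x) + 1 := by
  obtain ⟨hlt, hle⟩ := fanIdx_spec hj
  refine fanIdx_eq_of_lt (by rw [ell_cons_succ]; omega) fun m hm => ?_
  rcases m with _ | m
  · simp [ell]
  · have := ell_mono t (show m ≤ fanIdx t (j - x) - 1 by omega)
    rw [ell_cons_succ]
    omega

variable {c : ℕ} {t : List ℕ}

lemma fanIdx_mirror (hc : 1 ≤ c) {j : ℕ} (hj1 : 1 ≤ j) (hj : j < (c :: t).sum) :
    fanIdx (1 :: (c - 1) :: t) j = fanIdx (c :: t) j + 1 := by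
  simp only [List.sum_cons] at hj
  rw [fanIdx_cons_of_le hj1 (by simp only [List.sum_cons]; omega)]
  rcases lt_or_ge j c with hjc | hjc
  · rw [fanIdx_cons_of_lt hjc, fanIdx_cons_of_lt (by omega)]
  · rw [fanIdx_cons_of_le hjc (by omega), fanIdx_cons_of_le (by omega) (by omega)]
    rw [show j - 1 - (c - 1) = j - c by omega]

lemma isRight_mirror (hc : 1 ≤ c) {j : ℕ} (hj1 : 1 ≤ j) (hj : j < (c :: t).sum) :
    isRight (1 :: (c - 1) :: t) j ↔ ¬ isRight (c :: t) j := by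
  rw [isRight, isRight, fanIdx_mirror hc hj1 hj, Nat.odd_add_one]

end Fans

section Mirror

abbrev mirrorVtx : Equiv.Perm ℕ := Equiv.swap 0 1

def mirrorLbl (x : ℕ × ℕ) : ℕ × ℕ := (x.2 - x.1, x.2)

/-- `mirrorLbl` reduced modulo 2. -/
def mirrorPar (x : ℕ × ℕ) : ℕ × ℕ := ((x.1 + x.2) % 2, x.2)

lemma mirrorVtx_of_two_le {v : ℕ} (hv : 2 ≤ v) : mirrorVtx v = v :=
  Equiv.swap_apply_of_ne_of_ne (by omega) (by omega)

lemma mirrorLbl_add {x y : ℕ × ℕ} (hx : x.1 ≤ x.2) (hy : y.1 ≤ y.2) :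
    mirrorLbl x + mirrorLbl y = mirrorLbl (x + y) := by
  obtain ⟨r, s⟩ := x
  obtain ⟨r', s'⟩ := y
  simp only [mirrorLbl, Prod.mk_add_mk, Prod.mk.injEq] at *
  exact ⟨by omega, trivial⟩

lemma vtxLabel_num_le_den (a : List ℕ) (v : ℕ) : (vtxLabel a v).1 ≤ (vtxLabel a v).2 := by
  rcases lt_or_ge v 2 with hv | hv
  · interval_cases v <;> simp [vtxLabel]
  · obtain ⟨m, rfl⟩ := Nat.exists_eq_add_of_le' hv
    have := edgeLbl_num_le_den a m
    rw [vtxLabel_add_two]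
    simp only [Prod.fst_add, Prod.snd_add]
    omega

lemma onPath_map_iff {f : ℕ → ℕ} (hf : Function.Injective f) (γ : List ℕ) (x y : ℕ) :
    onPath (γ.map f) (f x) (f y) ↔ onPath γ x y := by
  simp only [onPath, ← List.map_tail, List.zip_map]
  rw [← Prod.map_apply f f x y, ← Prod.map_apply f f y x,
    List.mem_map_of_injective (hf.prodMap hf), List.mem_map_of_injective (hf.prodMap hf)]

lemma onPath_comm (γ : List ℕ) (x y : ℕ) : onPath γ x y ↔ onPath γ y x :=
  or_comm

variable {c : ℕ} {t : List ℕ}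

lemma sum_mirror (hc : 1 ≤ c) : (1 :: (c - 1) :: t).sum = (c :: t).sum := by
  simp only [List.sum_cons]
  omega

lemma edgeIdx_mirror (hc : 1 ≤ c) {m : ℕ} (hm : m + 2 ≤ (c :: t).sum) :
    edgeIdx (1 :: (c - 1) :: t) m =
      (mirrorVtx (edgeIdx (c :: t) m).2, mirrorVtx (edgeIdx (c :: t) m).1) := by
  induction m with
  | zero => simp [edgeIdx]
  | succ m ih =>
    have hflip := isRight_mirror (t := t) hc (j := m + 1) (by omega) (by omega)
    rw [edgeIdx, edgeIdx, ih (by omega)]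
    by_cases hR : isRight (c :: t) (m + 1)
    · rw [if_neg fun h => hflip.1 h hR, if_pos hR]
      simp [mirrorVtx_of_two_le (show 2 ≤ m + 2 by omega)]
    · rw [if_pos (hflip.2 hR), if_neg hR]
      simp [mirrorVtx_of_two_le (show 2 ≤ m + 2 by omega)]

lemma edgeLbl_mirror (hc : 1 ≤ c) {m : ℕ} (hm : m + 2 ≤ (c :: t).sum) :
    edgeLbl (1 :: (c - 1) :: t) m =
      (mirrorLbl (edgeLbl (c :: t) m).2, mirrorLbl (edgeLbl (c :: t) m).1) := by
  induction m with
  | zero => rfl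
  | succ m ih =>
    have hflip := isRight_mirror (t := t) hc (j := m + 1) (by omega) (by omega)
    have hle := edgeLbl_num_le_den (c :: t) m
    rw [edgeLbl, edgeLbl, ih (by omega)]
    by_cases hR : isRight (c :: t) (m + 1)
    · rw [if_neg fun h => hflip.1 h hR, if_pos hR]
      simp only [← Prod.mk_add_mk, Prod.mk.eta]
      rw [add_comm (mirrorLbl _), mirrorLbl_add hle.1 hle.2]
    · rw [if_pos (hflip.2 hR), if_neg hR]
      simp only [← Prod.mk_add_mk, Prod.mk.eta]
      rw [add_comm (mirrorLbl _), mirrorLbl_add hle.1 hle.2]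

lemma vtxLabel_mirror (hc : 1 ≤ c) {v : ℕ} (hv : v ≤ (c :: t).sum) :
    vtxLabel (1 :: (c - 1) :: t) (mirrorVtx v) = mirrorLbl (vtxLabel (c :: t) v) := by
  rcases lt_or_ge v 2 with hv2 | hv2
  · interval_cases v <;> rfl
  · obtain ⟨m, rfl⟩ := Nat.exists_eq_add_of_le' hv2
    have hle := edgeLbl_num_le_den (c :: t) m
    rw [mirrorVtx_of_two_le hv2, vtxLabel_add_two, vtxLabel_add_two, edgeLbl_mirror hc hv,
      mirrorLbl_add hle.2 hle.1, add_comm]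

lemma par2_mirror (hc : 1 ≤ c) {v : ℕ} (hv : v ≤ (c :: t).sum) :
    par2 (1 :: (c - 1) :: t) (mirrorVtx v) = mirrorPar (par2 (c :: t) v) := by
  have := vtxLabel_num_le_den (c :: t) v
  simp only [par2, vtxLabel_mirror hc hv, mirrorLbl, mirrorPar, Prod.mk.injEq]
  exact ⟨by omega, trivial⟩

lemma isStep_mirror (hc : 1 ≤ c) {u w : ℕ} (hu : u ≤ (c :: t).sum) (h : IsStep (c :: t) u w) :
    IsStep (1 :: (c - 1) :: t) (mirrorVtx u) (mirrorVtx w) := by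
  obtain ⟨hu2, hw⟩ := (isStep_iff _).1 h
  refine (isStep_iff _).2 ⟨by rwa [mirrorVtx_of_two_le hu2], ?_⟩
  rw [mirrorVtx_of_two_le hu2, edgeIdx_mirror hc (by omega)]
  rcases hw with rfl | rfl
  · exact Or.inr rfl
  · exact Or.inl rfl

lemma IsPathFrom.map_mirrorVtx (hc : 1 ≤ c) (hs : 2 ≤ (c :: t).sum) {γ : List ℕ}
    (h : IsPathFrom (c :: t) (c :: t).sum γ) :
    IsPathFrom (1 :: (c - 1) :: t) (1 :: (c - 1) :: t).sum (γ.map mirrorVtx) := by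
  refine ⟨?_, ?_, ?_⟩
  · rw [List.head?_map, h.1, sum_mirror hc, Option.map_some, mirrorVtx_of_two_le hs]
  · rw [List.getLast?_map]
    rcases h.2.1 with h0 | h1
    · simp [h0]
    · simp [h1]
  · exact (List.isChain_map _).2 <| h.2.2.imp_of_mem_imp fun u w hu _ huw =>
      isStep_mirror hc (h.le_of_mem hu) huw

end Mirror

section TopLabel

def stackStep (right : Bool) (e : (ℕ × ℕ) × (ℕ × ℕ)) : (ℕ × ℕ) × (ℕ × ℕ) :=
  if right then (e.1, e.1 + e.2) else (e.1 + e.2, e.2)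

def stackRun (w : List Bool) (e : (ℕ × ℕ) × (ℕ × ℕ)) : (ℕ × ℕ) × (ℕ × ℕ) :=
  w.foldl (fun e right => stackStep right e) e

/-- The orientations of the triangles of `AT(a)`, preceded by one extra right triangle that
turns the edge `(0/1, 1/0)` into the base edge `(0/1, 1/1)`. -/
def fanWord : List ℕ → List Bool
  | [] => []
  | x :: t => List.replicate x true ++ (fanWord t).map not

/-- Numerator and denominator of `cf a`, computed by the continuant recursion. -/
def cfFrac : List ℕ → ℕ × ℕ
  | [] => (0, 1)
  | x :: t => ((cfFrac t).2, x * (cfFrac t).2 + (cfFrac t).1)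

lemma cfFrac_den_pos {a : List ℕ} (ha : ∀ x ∈ a, 0 < x) : 0 < (cfFrac a).2 := by
  induction a with
  | nil => simp [cfFrac]
  | cons x t ih =>
    simp only [List.mem_cons, forall_eq_or_imp] at ha
    have := Nat.mul_pos ha.1 (ih ha.2)
    simp only [cfFrac]
    omega

lemma cfFrac_coprime (a : List ℕ) : (cfFrac a).1.Coprime (cfFrac a).2 := by
  induction a with
  | nil => simp [cfFrac]
  | cons x t ih => exact (Nat.coprime_mul_right_add_right _ _ _).2 ih.symm

lemma cf_eq_cfFrac {a : List ℕ} (ha : ∀ x ∈ a, 0 < x) :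
    cf a = ((cfFrac a).1 : ℚ) / (cfFrac a).2 := by
  induction a with
  | nil => simp [cf, cfFrac]
  | cons x t ih =>
    simp only [List.mem_cons, forall_eq_or_imp] at ha
    have hD : (0 : ℚ) < (cfFrac t).2 := by exact_mod_cast cfFrac_den_pos ha.2
    have hx : (0 : ℚ) < x := by exact_mod_cast ha.1
    rw [cf, ih ha.2, cfFrac]
    push_cast
    field_simp

lemma stackRun_append (w w' : List Bool) (e : (ℕ × ℕ) × (ℕ × ℕ)) :
    stackRun (w ++ w') e = stackRun w' (stackRun w e) :=
  List.foldl_append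

lemma stackRun_map_not (w : List Bool) (e : (ℕ × ℕ) × (ℕ × ℕ)) :
    stackRun (w.map not) e = (stackRun w e.swap).swap := by
  induction w generalizing e with
  | nil => rfl
  | cons r w ih =>
    have : stackStep (!r) e = (stackStep r e.swap).swap := by
      cases r <;> simp [stackStep, add_comm]
    simp only [List.map_cons, stackRun, List.foldl_cons] at ih ⊢
    rw [this, ih, Prod.swap_swap]

lemma stackRun_replicate_true (k : ℕ) (e : (ℕ × ℕ) × (ℕ × ℕ)) :
    stackRun (List.replicate k true) e = (e.1, k • e.1 + e.2) := by
  induction k generalizing e with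
  | zero => simp [stackRun]
  | succ k ih =>
    rw [List.replicate_succ', stackRun_append, ih]
    simp only [stackRun, stackStep, List.foldl_cons, List.foldl_nil, if_true, Prod.mk.injEq]
    exact ⟨trivial, by module⟩

lemma length_fanWord (a : List ℕ) : (fanWord a).length = a.sum := by
  induction a with
  | nil => rfl
  | cons x t ih => simp [fanWord, ih]

/-- `stackRun (fanWord a).dropLast e` is the edge carrying the last triangle, so the left side
is the apex of that triangle. -/
lemma stackRun_dropLast_fanWord {a : List ℕ} (ha : ∀ x ∈ a, 0 < x) (hne : a ≠ [])
    (e : (ℕ × ℕ) × (ℕ × ℕ)) :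
    (stackRun (fanWord a).dropLast e).1 + (stackRun (fanWord a).dropLast e).2 =
      (cfFrac a).2 • e.1 + (cfFrac a).1 • e.2 := by
  induction a generalizing e with
  | nil => exact absurd rfl hne
  | cons x t ih =>
    simp only [List.mem_cons, forall_eq_or_imp] at ha
    rcases eq_or_ne t [] with rfl | ht
    · obtain ⟨k, rfl⟩ : ∃ k, x = k + 1 := ⟨x - 1, by omega⟩
      simp only [fanWord, List.map_nil, List.append_nil, List.dropLast_replicate,
        Nat.add_sub_cancel, stackRun_replicate_true, cfFrac]
      module
    · have hw : (fanWord t).map not ≠ [] := by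
        rw [← List.length_pos_iff, List.length_map, length_fanWord]
        obtain ⟨y, hy⟩ := List.exists_mem_of_ne_nil t ht
        exact lt_of_lt_of_le (ha.2 y hy) (List.le_sum_of_mem hy)
      rw [fanWord, List.dropLast_append_of_ne_nil hw, stackRun_append, stackRun_replicate_true,
        ← List.map_dropLast, stackRun_map_not, Prod.fst_swap, Prod.snd_swap, add_comm,
        ih ha.2 ht]
      simp only [cfFrac, Prod.swap]
      module

lemma fanWord_getElem (a : List ℕ) (i : ℕ) (hi : i < (fanWord a).length) :
    (fanWord a)[i] = decide (isRight a i) := by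
  induction a generalizing i with
  | nil => simp [fanWord] at hi
  | cons x t ih =>
    rw [length_fanWord, List.sum_cons] at hi
    rcases lt_or_ge i x with hix | hix
    · simp only [fanWord]
      rw [List.getElem_append_left (by simpa using hix)]
      simp [isRight, fanIdx_cons_of_lt hix]
    · simp only [fanWord]
      rw [List.getElem_append_right (by simpa using hix)]
      simp only [List.length_replicate, List.getElem_map]
      rw [ih _ (by rw [length_fanWord]; omega), isRight, isRight,
        fanIdx_cons_of_le hix (by omega), Nat.odd_add_one]
      by_cases h : Odd (fanIdx t (i - x)) <;> simp [h]

lemma edgeLbl_eq_stackRun {a : List ℕ} (ha : ∀ x ∈ a, 0 < x) {m : ℕ} (hm : m < a.sum) :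
    edgeLbl a m = stackRun ((fanWord a).take (m + 1)) ((0, 1), (1, 0)) := by
  induction m with
  | zero =>
    cases a with
    | nil => simp at hm
    | cons x t =>
      obtain ⟨k, rfl⟩ : ∃ k, x = k + 1 := ⟨x - 1, by have := ha x List.mem_cons_self; omega⟩
      rfl
  | succ m ih =>
    have hlt : m + 1 < (fanWord a).length := by rw [length_fanWord]; exact hm
    rw [List.take_add_one, List.getElem?_eq_getElem hlt, stackRun_append, ← ih (by omega),
      fanWord_getElem]
    by_cases hR : isRight a (m + 1) <;> simp [edgeLbl, stackRun, stackStep, hR] <;> rfl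

lemma vtxLabel_sum {a : List ℕ} (ha : ∀ x ∈ a, 0 < x) (hs : 2 ≤ a.sum) :
    vtxLabel a a.sum = cfFrac a := by
  obtain ⟨m, hm⟩ := Nat.exists_eq_add_of_le' hs
  have hne : a ≠ [] := by rintro rfl; simp at hs
  rw [hm, vtxLabel_add_two, edgeLbl_eq_stackRun ha (by omega),
    show m + 1 = (fanWord a).length - 1 by rw [length_fanWord]; omega, ← List.dropLast_eq_take,
    stackRun_dropLast_fanWord ha hne]
  simp

lemma vtxLabel_sum_eq_of_cf_eq {a : List ℕ} (ha : ∀ x ∈ a, 0 < x) (hs : 2 ≤ a.sum) {p q : ℕ}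
    (hq : 0 < q) (hcop : p.Coprime q) (hval : cf a = (p : ℚ) / q) :
    vtxLabel a a.sum = (p, q) := by
  rw [cf_eq_cfFrac ha] at hval
  have := Rat.div_int_inj (a := (cfFrac a).1) (b := (cfFrac a).2) (c := p) (d := q)
    (by exact_mod_cast cfFrac_den_pos ha) (by exact_mod_cast hq) (cfFrac_coprime a) hcop
    (by simpa only [Int.cast_natCast] using hval)
  rw [vtxLabel_sum ha hs, Prod.ext_iff]
  exact_mod_cast this

end TopLabel

section Signs

/-- The edge condition of `SeifertParity`, where `c` is `1/1` or `0/1`. -/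
def ParityStep (a : List ℕ) (c : ℕ × ℕ) (u w : ℕ) : Prop :=
  (par2 a u = c ∧ par2 a w = (1, 0)) ∨ (par2 a u = (1, 0) ∧ par2 a w = c)

lemma ParityStep.par2_eq {a : List ℕ} {c : ℕ × ℕ} {x y z : ℕ} (hy : ParityStep a c x y)
    (hz : ParityStep a c x z) : par2 a y = par2 a z := by
  rcases hy with ⟨hx, hy⟩ | ⟨hx, hy⟩ <;> rcases hz with ⟨hx', hz⟩ | ⟨hx', hz⟩ <;> simp_all

lemma seifertParity_iff {a γ : List ℕ} (hodd : (vtxLabel a a.sum).2 % 2 = 1) :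
    SeifertParity a γ ↔ γ.IsChain (ParityStep a (par2 a a.sum)) := by
  unfold SeifertParity
  split_ifs with h
  · rw [h]; rfl
  · have : par2 a a.sum = (0, 1) := by
      simp only [par2, hodd, Prod.mk.injEq, and_true] at h ⊢
      omega
    rw [this]; rfl

variable {c : ℕ} {t : List ℕ}

lemma ParityStep.mirror (hc : 1 ≤ c) {x : ℕ × ℕ} {u w : ℕ} (hu : u ≤ (c :: t).sum)
    (hw : w ≤ (c :: t).sum) (h : ParityStep (c :: t) x u w) :
    ParityStep (1 :: (c - 1) :: t) (mirrorPar x) (mirrorVtx u) (mirrorVtx w) := by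
  rw [ParityStep, par2_mirror hc hu, par2_mirror hc hw]
  rcases h with ⟨hu, hw⟩ | ⟨hu, hw⟩ <;> simp [hu, hw, mirrorPar]

lemma par2_sum_mirror (hc : 1 ≤ c) (hs : 2 ≤ (c :: t).sum) :
    par2 (1 :: (c - 1) :: t) (1 :: (c - 1) :: t).sum =
      mirrorPar (par2 (c :: t) (c :: t).sum) := by
  conv_lhs => rw [sum_mirror hc, ← mirrorVtx_of_two_le hs]
  exact par2_mirror hc le_rfl

lemma IsSeifert.eq_map_mirrorVtx (hc : 1 ≤ c) (hs : 2 ≤ (c :: t).sum)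
    (hodd : (vtxLabel (c :: t) (c :: t).sum).2 % 2 = 1) {γ γ' : List ℕ}
    (hγ : IsSeifert (c :: t) γ) (hγ' : IsSeifert (1 :: (c - 1) :: t) γ') :
    γ' = γ.map mirrorVtx := by
  have hodd' : (vtxLabel (1 :: (c - 1) :: t) (1 :: (c - 1) :: t).sum).2 % 2 = 1 := by
    rw [sum_mirror hc, ← mirrorVtx_of_two_le hs, vtxLabel_mirror hc le_rfl]
    exact hodd
  refine IsPathFrom.eq_of_isChain
    (Q := ParityStep (1 :: (c - 1) :: t) (par2 (1 :: (c - 1) :: t) (1 :: (c - 1) :: t).sum))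
    (fun _ _ _ => ParityStep.par2_eq) hγ'.1
    (hγ.1.map_mirrorVtx hc hs) ((seifertParity_iff hodd').1 hγ'.2.2) ?_
  rw [par2_sum_mirror hc hs]
  exact (List.isChain_map _).2 <| ((seifertParity_iff hodd).1 hγ.2.2).imp_of_mem_imp
    fun u w hu hw h => h.mirror hc (hγ.1.le_of_mem hu) (hγ.1.le_of_mem hw)

lemma tsgn_one_mirror (hc : 1 ≤ c) (hs : 2 ≤ (c :: t).sum)
    (hodd : (vtxLabel (c :: t) (c :: t).sum).2 % 2 = 1) (γ γ' : List ℕ) :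
    tsgn (1 :: (c - 1) :: t) γ' 1 = -tsgn (c :: t) γ 1 := by
  simp only [tsgn]
  rw [par2_sum_mirror hc hs]
  simp only [par2]
  rcases Nat.mod_two_eq_zero_or_one (vtxLabel (c :: t) (c :: t).sum).1 with h | h <;>
    simp only [mirrorPar, h, hodd] <;> norm_num

lemma bottomEdgeOn_mirror (hc : 1 ≤ c) (ht : ∀ x ∈ t, 0 < x) {k : ℕ} (hk : 2 ≤ k)
    (hkt : k ≤ (c :: t).length) (γ : List ℕ) :
    bottomEdgeOn (1 :: (c - 1) :: t) (γ.map mirrorVtx) (k + 1) ↔ bottomEdgeOn (c :: t) γ k := by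
  obtain ⟨j, rfl⟩ := Nat.exists_eq_add_of_le' hk
  have hj : j < t.length := by simp only [List.length_cons] at hkt; omega
  have htake : ((1 :: (c - 1) :: t).take (j + 2)).sum = ((c :: t).take (j + 1)).sum := by
    simp only [List.take_succ_cons, List.sum_cons]
    omega
  have hm : ((c :: t).take (j + 1)).sum - 1 + 2 ≤ (c :: t).sum := by
    have h1 := List.sum_take_add_sum_drop t (j + 1)
    have h2 := List.sum_take_succ t j hj
    have h3 := ht _ (List.getElem_mem hj)
    simp only [List.take_succ_cons, List.sum_cons] at h1 h2 ⊢
    omega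
  simp only [bottomEdgeOn, Nat.add_sub_cancel, show j + 2 - 1 = j + 1 from rfl, htake,
    edgeIdx_mirror hc hm, onPath_map_iff (Equiv.injective _), onPath_comm]

lemma tsgn_mirror (hc : 1 ≤ c) (ht : ∀ x ∈ t, 0 < x) (hs : 2 ≤ (c :: t).sum)
    (hodd : (vtxLabel (c :: t) (c :: t).sum).2 % 2 = 1) {γ : List ℕ}
    (hγ : γ.IsChain (IsStep (c :: t))) :
    ∀ i, 1 ≤ i → i ≤ (c :: t).length →
      tsgn (1 :: (c - 1) :: t) (γ.map mirrorVtx) (i + 1) = -tsgn (c :: t) γ i := by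
  intro i hi
  induction i, hi using Nat.le_induction with
  | base =>
    intro _
    have hbot : ¬ bottomEdgeOn (1 :: (c - 1) :: t) (γ.map mirrorVtx) 2 := fun h =>
      not_onPath_zero_one hγ <| (onPath_comm _ _ _).1 <|
        (onPath_map_iff (Equiv.injective mirrorVtx) γ 1 0).1 h
    rw [tsgn.eq_3, if_neg hbot, one_mul, tsgn_one_mirror hc hs hodd]
  | succ i hi ih =>
    intro hi'
    obtain ⟨j, rfl⟩ := Nat.exists_eq_add_of_le' hi
    rw [tsgn.eq_3 _ _ (j + 1), tsgn.eq_3 (c :: t) γ j, ih (by omega),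
      bottomEdgeOn_mirror hc ht le_add_self hi']
    ring

end Signs

theorem mirror_signs_general (a1 : ℕ) (rest : List ℕ) (p q : ℕ)
    (h2 : 2 ≤ a1) (hpos : ∀ x ∈ rest, 0 < x)
    (hcop : Nat.Coprime p q) (hq : q % 2 = 1)
    (hval : cf (a1 :: rest) = (p : ℚ) / q)
    (γ γ' : List ℕ) (hγ : IsSeifert (a1 :: rest) γ)
    (hγ' : IsSeifert (1 :: (a1 - 1) :: rest) γ') :
    ∀ i, 1 ≤ i → i ≤ rest.length + 1 →
      tsgn (1 :: (a1 - 1) :: rest) γ' (i + 1) = -tsgn (a1 :: rest) γ i := by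
  have hs : 2 ≤ (a1 :: rest).sum := by simp only [List.sum_cons]; omega
  have hall : ∀ x ∈ a1 :: rest, 0 < x := List.forall_mem_cons.2 ⟨by omega, hpos⟩
  have hodd : (vtxLabel (a1 :: rest) (a1 :: rest).sum).2 % 2 = 1 := by
    rw [vtxLabel_sum_eq_of_cf_eq hall hs (by omega) hcop hval]
    exact hq
  rw [hγ.eq_map_mirrorVtx (by omega) hs hodd hγ']
  exact tsgn_mirror (by omega) hpos hs hodd hγ.1.2.2

/-- **Corollary (signs of the mirror image).**  Let `p/q = [a₁,…,aₙ]` be an irreducible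
fraction with `0 < p/q < 1`, `q` odd, and `a₁ ≥ 2`, so that
`(q−p)/q = [1, a₁−1, a₂,…,aₙ]`.  Let `t₁,…,tₙ` be the signs defined from `AT(p/q)` (via
its Seifert path `γ`) and `t′₁,…,t′_{n+1}` the signs defined from `AT((q−p)/q)` (via its
Seifert path `γ′`).  Then `t′_{i+1} = −t_i` for every `1 ≤ i ≤ n`. -/
theorem mirror_signs (a1 : ℕ) (rest : List ℕ) (p q : ℕ)
    (h2 : 2 ≤ a1) (hpos : ∀ x ∈ rest, 0 < x)
    (hp : 0 < p) (hlt : p < q) (hcop : Nat.Coprime p q) (hq : q % 2 = 1)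
    (hval : cf (a1 :: rest) = (p : ℚ) / q)
    (γ γ' : List ℕ) (hγ : IsSeifert (a1 :: rest) γ)
    (hγ' : IsSeifert (1 :: (a1 - 1) :: rest) γ') :
    ∀ i, 1 ≤ i → i ≤ rest.length + 1 →
      tsgn (1 :: (a1 - 1) :: rest) γ' (i + 1) = -tsgn (a1 :: rest) γ i :=
  mirror_signs_general a1 rest p q h2 hpos hcop hq hval γ γ' hγ hγ'

end TwoBridge

end
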